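/- Independence from representatives for DF/TT: for every set Γ of formulae and all formulae A, B, C, D: (i) if Γ ⊨_DF/TT A ↔ B then Γ ⊨_DF/TT ¬A ↔ ¬B; (ii) if Γ ⊨_DF/TT A ↔ B and Γ ⊨_DF/TT C ↔ D then Γ ⊨_DF/TT (A∧C) ↔ (B∧D); (iii) under the same hypotheses, Γ ⊨_DF/TT (A∨C) ↔ (B∨D); (iv) under the same hypotheses, Γ ⊨_DF/TT (A→C) ↔ (B→D). -/
import Mathlib


inductive Formula : Type
  | var : Nat → Formula
  | neg : Formula → Formula
  | conj : Formula → Formula → Formula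
  | disj : Formula → Formula → Formula
  | impl : Formula → Formula → Formula
deriving DecidableEq

inductive TV : Type
  | zero
  | half
  | one
deriving DecidableEq

/-- Strong Kleene negation: 0↦1, ½↦½, 1↦0. -/
def tneg : TV → TV
  | .zero => .one
  | .half => .half
  | .one => .zero

/-- min on {0,½,1}. -/
def tmin : TV → TV → TV
  | .zero, _ => .zero
  | .half, .zero => .zero
  | .half, .half => .half
  | .half, .one => .half
  | .one, b => b

/-- max on {0,½,1}. -/
def tmax : TV → TV → TV
  | .one, _ => .one
  | .half, .zero => .half
  | .half, .half => .half
  | .half, .one => .one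
  | .zero, b => b

/-- Designated values: ½ and 1. -/
def designated (x : TV) : Prop := x = TV.half ∨ x = TV.one

/-- The de Finetti conditional table: f_DF(x,y) = y if x = 1, and ½ if x ∈ {0,½}. -/
def fDF : TV → TV → TV
  | .one, b => b
  | .zero, _ => .half
  | .half, _ => .half

/-- A DF-evaluation. -/
def IsDFEval (v : Formula → TV) : Prop :=
  (∀ A, v (.neg A) = tneg (v A)) ∧
  (∀ A B, v (.conj A B) = tmin (v A) (v B)) ∧
  (∀ A B, v (.disj A B) = tmax (v A) (v B)) ∧
  (∀ A B, v (.impl A B) = fDF (v A) (v B))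

/-- TT-validity: Γ ⊨_DF/TT A. -/
def DFConsequence (Γ : Set Formula) (A : Formula) : Prop :=
  ∀ v : Formula → TV, IsDFEval v → (∀ B ∈ Γ, designated (v B)) → designated (v A)

/-- The biconditional A ↔ B := (A→B) ∧ (B→A). -/
def fiff (A B : Formula) : Formula := .conj (.impl A B) (.impl B A)

instance : Fintype TV :=
  ⟨{.zero, .half, .one}, by intro x; cases x <;> simp⟩

instance (x : TV) : Decidable (designated x) := by
  unfold designated; infer_instance

lemma fiff_val {v : Formula → TV} (hv : IsDFEval v) (X Y : Formula) :
    v (fiff X Y) = tmin (fDF (v X) (v Y)) (fDF (v Y) (v X)) := by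
  obtain ⟨_, hc, _, hi⟩ := hv
  simp [fiff, hc, hi]

/-- Independence from representatives for DF/TT: provable equivalence is a
congruence for ¬, ∧, ∨ and →. -/
theorem df_independence (Γ : Set Formula) (A B C D : Formula) :
    (DFConsequence Γ (fiff A B) → DFConsequence Γ (fiff (.neg A) (.neg B))) ∧
    (DFConsequence Γ (fiff A B) → DFConsequence Γ (fiff C D) →
      DFConsequence Γ (fiff (.conj A C) (.conj B D))) ∧
    (DFConsequence Γ (fiff A B) → DFConsequence Γ (fiff C D) →
      DFConsequence Γ (fiff (.disj A C) (.disj B D))) ∧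
    (DFConsequence Γ (fiff A B) → DFConsequence Γ (fiff C D) →
      DFConsequence Γ (fiff (.impl A C) (.impl B D))) := by
  refine ⟨?_, ?_, ?_, ?_⟩
  · intro h v hv hΓ
    have hAB := h v hv hΓ
    have hF := fiff_val hv
    obtain ⟨hn, _, _, _⟩ := hv
    rw [hF] at hAB ⊢
    rw [hn, hn]
    revert hAB
    generalize v A = a; generalize v B = b
    revert a b; decide
  · intro h h2 v hv hΓ
    have hAB := h v hv hΓ
    have hCD := h2 v hv hΓ
    have hF := fiff_val hv
    obtain ⟨_, hc, _, _⟩ := hv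
    rw [hF] at hAB hCD ⊢
    rw [hc, hc]
    revert hAB hCD
    generalize v A = a; generalize v B = b; generalize v C = c; generalize v D = d
    revert a b c d; decide
  · intro h h2 v hv hΓ
    have hAB := h v hv hΓ
    have hCD := h2 v hv hΓ
    have hF := fiff_val hv
    obtain ⟨_, _, hd, _⟩ := hv
    rw [hF] at hAB hCD ⊢
    rw [hd, hd]
    revert hAB hCD
    generalize v A = a; generalize v B = b; generalize v C = c; generalize v D = d
    revert a b c d; decide
  · intro h h2 v hv hΓ
    have hAB := h v hv hΓ
    have hCD := h2 v hv hΓ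
    have hF := fiff_val hv
    obtain ⟨_, _, _, hi⟩ := hv
    rw [hF] at hAB hCD ⊢
    rw [hi, hi]
    revert hAB hCD
    generalize v A = a; generalize v B = b; generalize v C = c; generalize v D = d
    revert a b c d; decide
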